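/- Fix n ∈ ℕ and consider the capacitated house allocation instance with houses h_1, h_2, h_3 of capacities q[h_1] = 1, q[h_2] = 2, q[h_3] = n + 1, applicants a_1,…,a_{n+2} each with preference h_1 ≻ h_2 ≻ h_3, and an applicant b with preference h_2 ≻ h_1. Then every capacity increase vector r ≥ 0 such that the instance with capacities q + r admits a perfect popular matching satisfies |r|_1 ≥ n. -/

import Mathlib

noncomputable section

open Finset

attribute [local instance] Classical.propDecidable

/-- `Better l x y` means the (optional) house `x` is strictly preferred to the (optional)
house `y` according to the strict preference list `l` (earlier in the list = more
preferred); being matched to any acceptable house is preferred to being unmatched. -/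
def Better {H : Type*} (l : List H) : Option H → Option H → Prop
  | some h, some h' => h ∈ l ∧ l.idxOf h < l.idxOf h'
  | some h, none => h ∈ l
  | none, _ => False

/-- A capacitated house allocation instance: each applicant `a` has a strict preference
list `pref a` over her acceptable houses (most preferred first, acceptable = on the list),
and each house `h` has a capacity `cap h`. -/
structure HA (A H : Type*) where
  pref : A → List H
  cap : H → ℕ

namespace HA

variable {A H : Type*} [Fintype A]

/-- A matching assigns to each applicant at most one acceptable house,
respecting the houses' capacities. -/
def IsMatching (I : HA A H) (M : A → Option H) : Prop :=
  (∀ a h, M a = some h → h ∈ I.pref a) ∧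
  ∀ h, (univ.filter fun a => M a = some h).card ≤ I.cap h

/-- A matching is perfect if every applicant is matched. -/
def Perfect (M : A → Option H) : Prop := ∀ a, (M a).isSome

/-- `M'` dominates `M` if strictly more applicants prefer `M'` to `M` than
prefer `M` to `M'`. -/
def Dominates (I : HA A H) (M' M : A → Option H) : Prop :=
  (univ.filter fun a => Better (I.pref a) (M a) (M' a)).card <
    (univ.filter fun a => Better (I.pref a) (M' a) (M a)).card

/-- A matching is popular if no matching dominates it. -/
def Popular (I : HA A H) (M : A → Option H) : Prop :=
  I.IsMatching M ∧ ∀ M', I.IsMatching M' → ¬ I.Dominates M' M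

/-- `M'` Pareto-dominates `M` if every applicant is at least as well off in `M'`,
and some applicant is strictly better off. -/
def ParetoDominates (I : HA A H) (M' M : A → Option H) : Prop :=
  (∀ a, M' a = M a ∨ Better (I.pref a) (M' a) (M a)) ∧
  ∃ a, Better (I.pref a) (M' a) (M a)

/-- A matching is Pareto-optimal if no matching Pareto-dominates it. -/
def ParetoOptimal (I : HA A H) (M : A → Option H) : Prop :=
  I.IsMatching M ∧ ∀ M', I.IsMatching M' → ¬ I.ParetoDominates M' M

/-- The cardinality of a matching: the number of matched applicants. -/
def size (M : A → Option H) : ℕ := (univ.filter fun a => (M a).isSome).card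

/-- `f(a)`: the most preferred acceptable house of `a` (if any). -/
def fOpt (I : HA A H) (a : A) : Option H := (I.pref a).head?

/-- The admirers of a house `h`: the applicants whose most preferred house is `h`. -/
def admirers (I : HA A H) (h : H) : Finset A := univ.filter fun a => I.fOpt a = some h

/-- `s(a)`: equals `f(a)` if `f(a)` has at most `cap (f a)` admirers; otherwise the
most preferred acceptable house of `a` having strictly fewer admirers than its
capacity; `none` if no such house exists. -/
def sOpt (I : HA A H) (a : A) : Option H :=
  match (I.pref a).head? with
  | none => none
  | some h =>
    if (I.admirers h).card ≤ I.cap h then some h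
    else (I.pref a).find? fun h' => decide ((I.admirers h').card < I.cap h')

/-- `(a, h)` is an edge of the first/second-choice multigraph `G'`. -/
def InG' (I : HA A H) (a : A) (h : H) : Prop := I.fOpt a = some h ∨ I.sOpt a = some h

/-- The set of applicants matched to house `h` in `M`. -/
def matchedTo (M : A → Option H) (h : H) : Finset A := univ.filter fun a => M a = some h

/-- An admissible matching: every edge lies in `G'`; every house having at least as many
admirers as its capacity is saturated by admirers only; and every house having at most
as many admirers as its capacity has all its admirers matched to it. -/
def Admissible (I : HA A H) (M : A → Option H) : Prop :=
  I.IsMatching M ∧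
  (∀ a h, M a = some h → I.InG' a h) ∧
  (∀ h, I.cap h ≤ (I.admirers h).card →
      (matchedTo M h).card = I.cap h ∧ ∀ a ∈ matchedTo M h, I.fOpt a = some h) ∧
  (∀ h, (I.admirers h).card ≤ I.cap h → ∀ a ∈ I.admirers h, M a = some h)

end HA

/-- The example instance: houses `h₁ = 0, h₂ = 1, h₃ = 2` with capacities `c 0, c 1, c 2`;
applicants `a_1, …, a_{n+2}` (the `Sum.inl` applicants) each with preference
`h₁ ≻ h₂ ≻ h₃`, and an applicant `b` (the `Sum.inr` applicant) with preference
`h₂ ≻ h₁`. -/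
def exampleInstance (n : ℕ) (c : Fin 3 → ℕ) : HA (Fin (n + 2) ⊕ Unit) (Fin 3) where
  pref := fun a =>
    match a with
    | Sum.inl _ => [0, 1, 2]
    | Sum.inr _ => [1, 0]
  cap := c

/-!
Suppose `|r|₁ < n` and `M` is a perfect popular matching. House `h₁` is full: otherwise one of the
`n + 2` applicants `aᵢ`, who cannot all fit into `h₁`, could move there. House `h₂` is full as
well, since otherwise an `aᵢ` on `h₃` could move up; counting then leaves someone on `h₃`. If `b` is
on `h₂`, the rotation moving an applicant from `h₃` to `h₂`, an `aᵢ` from `h₂` to `h₁` and one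
from `h₁` to `h₃` makes two applicants better off and one worse off. If `b` is on `h₁`, swapping
`b` with an applicant on `h₂` makes both better off.
-/

section Better

variable {H : Type*} {l : List H}

theorem better_irrefl (x : Option H) : ¬ Better l x x := by
  cases x <;> simp [Better]

theorem Better.asymm {x y : Option H} (hxy : Better l x y) : ¬ Better l y x :=
  match x, y with
  | some _, some _ => fun hyx => lt_asymm hxy.2 hyx.2
  | some _, none => id
  | none, _ => hxy.elim

theorem better_cons_self_iff {h : H} {o : Option H} :
    Better (h :: l) (some h) o ↔ o ≠ some h := by
  cases o with
  | none => simp [Better]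
  | some h' =>
    by_cases hh : h' = h
    · simp [Better, hh]
    · simp [Better, hh, List.idxOf_cons_ne _ (Ne.symm hh)]

theorem not_better_cons_self {h : H} (o : Option H) : ¬ Better (h :: l) o (some h) := by
  cases o with
  | none => simp [Better]
  | some h' => simp [Better]

theorem better_cons_iff_of_ne {a h h' : H} (ha : h ≠ a) (ha' : h' ≠ a) :
    Better (a :: l) (some h) (some h') ↔ Better l (some h) (some h') := by
  simp [Better, ha, List.idxOf_cons_ne _ (Ne.symm ha), List.idxOf_cons_ne _ (Ne.symm ha')]

end Better

namespace HA

variable {A H : Type*} [Fintype A] {I : HA A H} {M M' : A → Option H}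

@[simp]
theorem mem_matchedTo {a : A} {h : H} : a ∈ matchedTo M h ↔ M a = some h := by
  simp [matchedTo]

theorem sum_card_matchedTo [Fintype H] (M : A → Option H) :
    ∑ h, #(matchedTo M h) = size M := by
  rw [size, ← card_biUnion]
  · congr 1
    ext a
    simp [Option.isSome_iff_exists]
  · intro h _ h' _ hne
    refine disjoint_left.mpr fun a ha ha' => hne ?_
    rw [mem_matchedTo] at ha ha'
    exact Option.some.inj (ha.symm.trans ha')

theorem Perfect.size_eq (hM : Perfect M) : size M = Fintype.card A := by
  rw [size, filter_true_of_mem fun a _ => hM a, card_univ]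

theorem dominates_of_card_lt (W B : Finset A)
    (hW : ∀ a, Better (I.pref a) (M a) (M' a) → a ∈ W)
    (hB : ∀ a ∈ B, Better (I.pref a) (M' a) (M a)) (hWB : #W < #B) : I.Dominates M' M :=
  calc #(univ.filter fun a => Better (I.pref a) (M a) (M' a))
      ≤ #W := card_le_card fun a ha => hW a (mem_filter.mp ha).2
    _ < #B := hWB
    _ ≤ #(univ.filter fun a => Better (I.pref a) (M' a) (M a)) :=
      card_le_card fun a ha => mem_filter.mpr ⟨mem_univ a, hB a ha⟩

theorem IsMatching.update (hM : I.IsMatching M) {a : A} {h : H} (ha : h ∈ I.pref a)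
    (hh : #(matchedTo M h) < I.cap h) : I.IsMatching (Function.update M a (some h)) := by
  refine ⟨fun a' h' ha' => ?_, fun h' => ?_⟩
  · rcases eq_or_ne a' a with rfl | hne
    · simp_all
    · exact hM.1 a' h' (by simpa [hne] using ha')
  · rcases eq_or_ne h' h with rfl | hne
    · calc _ ≤ #(insert a (matchedTo M h')) := card_le_card fun x hx => by
            rcases eq_or_ne x a with rfl | hxa
            · exact mem_insert_self _ _
            · simpa [hxa] using hx
        _ ≤ _ := (card_insert_le _ _).trans hh
    · refine le_trans (card_le_card fun x hx => ?_) (hM.2 h')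
      rcases eq_or_ne x a with rfl | hxa
      · simp [Ne.symm hne] at hx
      · simpa [hxa] using hx

theorem IsMatching.comp_perm (hM : I.IsMatching M) (σ : Equiv.Perm A)
    (hacc : ∀ a h, M (σ a) = some h → h ∈ I.pref a) : I.IsMatching (M ∘ σ) := by
  refine ⟨hacc, fun h => ?_⟩
  have hcard : #(univ.filter fun a => M (σ a) = some h) = #(matchedTo M h) := by
    simp only [matchedTo, card_filter]
    exact Equiv.sum_comp σ fun a => if M a = some h then 1 else 0
  exact hcard.le.trans (hM.2 h)

theorem Popular.not_better_of_lt_cap (hM : I.Popular M) {a : A} {h : H} (ha : h ∈ I.pref a)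
    (hh : #(matchedTo M h) < I.cap h) : ¬ Better (I.pref a) (some h) (M a) := fun hbetter =>
  hM.2 _ (hM.1.update ha hh) <| dominates_of_card_lt ∅ {a}
    (fun x hx => by
      rcases eq_or_ne x a with rfl | hxa
      · rw [Function.update_self] at hx
        exact (hbetter.asymm hx).elim
      · simp [hxa, better_irrefl] at hx)
    (by simpa using hbetter) (by simp)

end HA

namespace exampleInstance

open HA

variable {n : ℕ} {c : Fin 3 → ℕ} {M : Fin (n + 2) ⊕ Unit → Option (Fin 3)}

theorem pref_of_ne_inr {a : Fin (n + 2) ⊕ Unit} (ha : a ≠ Sum.inr ()) :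
    (exampleInstance n c).pref a = [0, 1, 2] := by
  cases a with
  | inl _ => rfl
  | inr _ => exact absurd rfl ha

theorem pref_inr : (exampleInstance n c).pref (Sum.inr ()) = [1, 0] := rfl

theorem mem_pref_of_ne_inr {a : Fin (n + 2) ⊕ Unit} (ha : a ≠ Sum.inr ()) (h : Fin 3) :
    h ∈ (exampleInstance n c).pref a := by
  rw [pref_of_ne_inr ha]
  fin_cases h <;> simp

theorem ne_inr_of_eq_some_two (hM : (exampleInstance n c).IsMatching M)
    {a : Fin (n + 2) ⊕ Unit} (ha : M a = some 2) : a ≠ Sum.inr () := by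
  rintro rfl
  simpa [pref_inr] using hM.1 _ _ ha

theorem better_one_two : Better ([0, 1, 2] : List (Fin 3)) (some 1) (some 2) := by
  rw [better_cons_iff_of_ne (by decide) (by decide), better_cons_self_iff]
  decide

theorem min_cap_le_card_matchedTo_zero (hpop : (exampleInstance n c).Popular M) :
    min (c 0) (n + 2) ≤ #(matchedTo M 0) := by
  by_contra! hlt
  have hall : ∀ i, M (Sum.inl i) = some 0 := fun i => by
    by_contra hi
    refine hpop.not_better_of_lt_cap (a := Sum.inl i) (h := 0) (mem_pref_of_ne_inr Sum.inl_ne_inr 0)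
      (lt_of_lt_of_le hlt (min_le_left _ _)) ?_
    exact better_cons_self_iff.mpr hi
  have : n + 2 ≤ #(matchedTo M 0) := by
    simpa using card_le_card_of_injOn (s := univ) (t := matchedTo M 0) Sum.inl
      (fun i _ => by simp [hall]) Sum.inl_injective.injOn
  omega

theorem card_matchedTo_two_eq_zero (hpop : (exampleInstance n c).Popular M)
    (h1 : #(matchedTo M 1) < c 1) : #(matchedTo M 2) = 0 := by
  refine card_eq_zero.mpr <| eq_empty_of_forall_notMem fun a ha => ?_
  have ha : M a = some 2 := mem_matchedTo.mp ha
  have hpref := pref_of_ne_inr (c := c) (ne_inr_of_eq_some_two hpop.1 ha)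
  refine hpop.not_better_of_lt_cap (a := a) (h := 1) (by simp [hpref]) h1 ?_
  rw [hpref, ha]
  exact better_one_two

theorem card_matchedTo_one_eq_zero (hpop : (exampleInstance n c).Popular M)
    (hb : M (Sum.inr ()) = some 0) : #(matchedTo M 1) = 0 := by
  refine card_eq_zero.mpr <| eq_empty_of_forall_notMem fun y hy => ?_
  have hy : M y = some 1 := mem_matchedTo.mp hy
  have hyb : y ≠ Sum.inr () := by rintro rfl; simp [hb] at hy
  have hpref := pref_of_ne_inr (c := c) hyb
  set σ := Equiv.swap (Sum.inr ()) y
  have hσ : ∀ a, a ≠ Sum.inr () → a ≠ y → σ a = a := fun a => Equiv.swap_apply_of_ne_of_ne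
  refine hpop.2 (M ∘ σ) (hpop.1.comp_perm σ fun a h ha => ?_) <|
    dominates_of_card_lt ∅ {Sum.inr (), y} (fun a ha => ?_) ?_ (by simp [Ne.symm hyb])
  · by_cases hab : a = Sum.inr ()
    · subst hab
      simp_all [σ, pref_inr]
    · exact mem_pref_of_ne_inr hab h
  · rcases eq_or_ne a (Sum.inr ()) with rfl | hab
    · simp [σ, hb, hy, pref_inr, not_better_cons_self] at ha
    rcases eq_or_ne a y with rfl | hay
    · simp [σ, hb, hy, hpref, not_better_cons_self] at ha
    · simp [hσ a hab hay, better_irrefl] at ha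
  · simp [σ, hb, hy, hpref, pref_inr, better_cons_self_iff]

theorem card_matchedTo_of_inr_eq_one (hpop : (exampleInstance n c).Popular M)
    (hb : M (Sum.inr ()) = some 1) :
    #(matchedTo M 0) = 0 ∨ #(matchedTo M 1) ≤ 1 ∨ #(matchedTo M 2) = 0 := by
  by_contra! hcard
  obtain ⟨z, hz⟩ := card_pos.mp (Nat.pos_of_ne_zero hcard.1)
  obtain ⟨y, hy, hyb⟩ := exists_mem_ne hcard.2.1 (Sum.inr ())
  obtain ⟨x, hx⟩ := card_pos.mp (Nat.pos_of_ne_zero hcard.2.2)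
  simp only [mem_matchedTo] at hx hy hz
  have hxb : x ≠ Sum.inr () := ne_inr_of_eq_some_two hpop.1 hx
  have hzb : z ≠ Sum.inr () := by rintro rfl; simp [hb] at hz
  have hxy : x ≠ y := by rintro rfl; simp [hx] at hy
  have hxz : x ≠ z := by rintro rfl; simp [hx] at hz
  have hyz : y ≠ z := by rintro rfl; simp [hy] at hz
  set σ := Equiv.swap x y * Equiv.swap y z
  have hσx : σ x = y := by simp [σ, Equiv.swap_apply_of_ne_of_ne hxy hxz]
  have hσy : σ y = z := by simp [σ, Equiv.swap_apply_of_ne_of_ne hxz.symm hyz.symm]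
  have hσz : σ z = x := by simp [σ]
  have hσ : ∀ a, a ≠ x → a ≠ y → a ≠ z → σ a = a := fun a hax hay haz => by
    simp [σ, Equiv.swap_apply_of_ne_of_ne hay haz, Equiv.swap_apply_of_ne_of_ne hax hay]
  refine hpop.2 (M ∘ σ) (hpop.1.comp_perm σ fun a h ha => ?_) <|
    dominates_of_card_lt {z} {x, y} (fun a ha => ?_) ?_ (by simp [hxy])
  · by_cases hab : a = Sum.inr ()
    · subst hab
      rw [hσ _ hxb.symm hyb.symm hzb.symm] at ha
      exact hpop.1.1 _ _ ha
    · exact mem_pref_of_ne_inr hab h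
  · rcases eq_or_ne a x with rfl | hax
    · simp [hσx, hx, hy, pref_of_ne_inr hxb, better_one_two.asymm] at ha
    rcases eq_or_ne a y with rfl | hay
    · simp [hσy, hy, hz, pref_of_ne_inr hyb, not_better_cons_self] at ha
    rcases eq_or_ne a z with rfl | haz
    · exact mem_singleton_self a
    · simp [hσ a hax hay haz, better_irrefl] at ha
  · simp [hσx, hσy, hx, hy, hz, pref_of_ne_inr hxb, pref_of_ne_inr hyb, better_one_two,
      better_cons_self_iff]

end exampleInstance

open HA exampleInstance

/-- with initial capacities `q[h₁] = 1`, `q[h₂] = 2`, `q[h₃] = n + 1`,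
every capacity increase vector `r ≥ 0` such that the instance with capacities `q + r`
admits a perfect popular matching satisfies `|r|₁ ≥ n`. -/
theorem increase_only_needs_n (n : ℕ) (r : Fin 3 → ℕ)
    (h : ∃ M, HA.Perfect M ∧
      (exampleInstance n fun h => ![1, 2, n + 1] h + r h).Popular M) :
    n ≤ ∑ h, r h := by
  obtain ⟨M, hperf, hpop⟩ := h
  have htotal : #(matchedTo M 0) + #(matchedTo M 1) + #(matchedTo M 2) = n + 3 := by
    simpa [Fin.sum_univ_three, hperf.size_eq] using sum_card_matchedTo M
  have hcap0 : #(matchedTo M 0) ≤ 1 + r 0 := hpop.1.2 0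
  have hcap1 : #(matchedTo M 1) ≤ 2 + r 1 := hpop.1.2 1
  have hfull0 : min (1 + r 0) (n + 2) ≤ #(matchedTo M 0) := min_cap_le_card_matchedTo_zero hpop
  have hfull1 : 2 + r 1 ≤ #(matchedTo M 1) ∨ #(matchedTo M 2) = 0 :=
    (le_or_gt _ _).imp_right (card_matchedTo_two_eq_zero hpop)
  obtain ⟨hb, hbM⟩ := Option.isSome_iff_exists.mp (hperf (Sum.inr ()))
  have hb : hb = 1 ∨ hb = 0 := by simpa [pref_inr] using hpop.1.1 _ _ hbM
  rw [Fin.sum_univ_three]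
  rcases hb with rfl | rfl
  · have := card_matchedTo_of_inr_eq_one hpop hbM
    omega
  · have := card_matchedTo_one_eq_zero hpop hbM
    omega
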